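/- For every a ∈ ℝ, the sixth iterate of the trace map fixes (0,0,a), i.e., T⁶(0,0,a) = (0,0,a), and the total derivative (Jacobian matrix) of T⁶ at the point (0,0,a) equals the matrix with rows (16a⁴ − 4a² + 1, 8a³, 0), (8a³, 4a² + 1, 0), (0, 0, 1). -/

import Mathlib

noncomputable section

/-- The trace map `T(x,y,z) = (2xy - z, x, y)` on `ℝ³`. -/
def traceMap (v : Fin 3 → ℝ) : Fin 3 → ℝ :=
  ![2 * v 0 * v 1 - v 2, v 0, v 1]

/-! Along the axis, `T` moves `(0,0,a) ↦ (-a,0,0) ↦ (0,-a,0) ↦ (0,0,-a)`, so `T³` acts on the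
axis as `a ↦ -a` and `T⁶ = T³ ∘ T³` fixes it. By the chain rule, the Jacobian of `T³` at
`(0,0,b)` is `P b = [[4b²-1, 2b, 0], [-2b, -1, 0], [0, 0, -1]]`, and that of `T⁶` at `(0,0,a)` is
`P (-a) * P a`. -/

theorem HasFDerivAt.comp_mulVecLin {𝕜 : Type*} [NontriviallyNormedField 𝕜] [CompleteSpace 𝕜]
    {l m n : Type*} [Fintype l] [Fintype m] [Fintype n]
    {g : (m → 𝕜) → l → 𝕜} {f : (n → 𝕜) → m → 𝕜} {A : Matrix l m 𝕜} {B : Matrix m n 𝕜}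
    {x : n → 𝕜}
    (hg : HasFDerivAt g (LinearMap.toContinuousLinearMap A.mulVecLin) (f x))
    (hf : HasFDerivAt f (LinearMap.toContinuousLinearMap B.mulVecLin) x) :
    HasFDerivAt (g ∘ f) (LinearMap.toContinuousLinearMap (A * B).mulVecLin) x := by
  refine (hg.comp x hf).congr_fderiv ?_
  ext1 v
  simp [Matrix.mulVecLin_mul]

def traceMapJacobian (v : Fin 3 → ℝ) : Matrix (Fin 3) (Fin 3) ℝ :=
  !![2 * v 1, 2 * v 0, -1; 1, 0, 0; 0, 1, 0]

theorem hasFDerivAt_traceMap (v : Fin 3 → ℝ) :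
    HasFDerivAt traceMap (LinearMap.toContinuousLinearMap (traceMapJacobian v).mulVecLin) v := by
  have hproj (i : Fin 3) : HasFDerivAt (fun w : Fin 3 → ℝ => w i)
      (ContinuousLinearMap.proj i : (Fin 3 → ℝ) →L[ℝ] ℝ) v := hasFDerivAt_apply i v
  refine hasFDerivAt_pi'' fun i => ?_
  fin_cases i
  · refine ((((hproj 0).const_mul 2).mul (hproj 1)).sub (hproj 2)).congr_fderiv ?_
    ext u
    simp [traceMapJacobian, dotProduct, Fin.sum_univ_three]
    ring
  · refine (hproj 0).congr_fderiv ?_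
    ext u
    simp [traceMapJacobian, dotProduct, Fin.sum_univ_three]
  · refine (hproj 1).congr_fderiv ?_
    ext u
    simp [traceMapJacobian, dotProduct, Fin.sum_univ_three]

theorem traceMap_axis_z (a : ℝ) : traceMap ![0, 0, a] = ![-a, 0, 0] := by
  ext i; fin_cases i <;> simp [traceMap]

theorem traceMap_axis_x (a : ℝ) : traceMap ![a, 0, 0] = ![0, a, 0] := by
  ext i; fin_cases i <;> simp [traceMap]

theorem traceMap_axis_y (a : ℝ) : traceMap ![0, a, 0] = ![0, 0, a] := by
  ext i; fin_cases i <;> simp [traceMap]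

theorem traceMap_iterate_three_axis_z (a : ℝ) : traceMap^[3] ![0, 0, a] = ![0, 0, -a] := by
  simp only [Function.iterate_succ_apply', Function.iterate_zero_apply, traceMap_axis_z,
    traceMap_axis_x, traceMap_axis_y]

theorem traceMap_iterate_six_axis_z (a : ℝ) : traceMap^[6] ![0, 0, a] = ![0, 0, a] := by
  rw [Function.iterate_add_apply traceMap 3 3, traceMap_iterate_three_axis_z,
    traceMap_iterate_three_axis_z, neg_neg]

theorem hasFDerivAt_traceMap_iterate_three_axis_z (b : ℝ) :
    HasFDerivAt traceMap^[3]
      (LinearMap.toContinuousLinearMap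
        (!![4 * b ^ 2 - 1, 2 * b, 0; -2 * b, -1, 0; 0, 0, -1] : Matrix (Fin 3) (Fin 3) ℝ).mulVecLin)
      ![0, 0, b] := by
  have h₀ := hasFDerivAt_traceMap ![0, 0, b]
  have h₁ : HasFDerivAt traceMap
      (LinearMap.toContinuousLinearMap (traceMapJacobian ![-b, 0, 0]).mulVecLin)
      (traceMap ![0, 0, b]) := traceMap_axis_z b ▸ hasFDerivAt_traceMap _
  have h₂ : HasFDerivAt traceMap
      (LinearMap.toContinuousLinearMap (traceMapJacobian ![0, -b, 0]).mulVecLin)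
      ((traceMap ∘ traceMap) ![0, 0, b]) := by
    simpa only [Function.comp_apply, traceMap_axis_z, traceMap_axis_x]
      using hasFDerivAt_traceMap ![0, -b, 0]
  refine (h₂.comp_mulVecLin (h₁.comp_mulVecLin h₀)).congr_fderiv ?_
  congr 2
  simp only [traceMapJacobian, Matrix.mul_fin_three]
  norm_num
  ring_nf

/-- For every `a ∈ ℝ`, the sixth iterate of the trace map fixes `(0,0,a)`, and its
Jacobian there is `[[16a⁴-4a²+1, 8a³, 0], [8a³, 4a²+1, 0], [0,0,1]]`. -/
theorem traceMap_sixth_iterate_at_axis (a : ℝ) :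
    traceMap^[6] ![0, 0, a] = ![0, 0, a] ∧
    (fderiv ℝ (traceMap^[6]) ![0, 0, a] : (Fin 3 → ℝ) →ₗ[ℝ] (Fin 3 → ℝ)) =
      Matrix.mulVecLin !![16 * a ^ 4 - 4 * a ^ 2 + 1, 8 * a ^ 3, 0;
                          8 * a ^ 3, 4 * a ^ 2 + 1, 0;
                          0, 0, 1] := by
  refine ⟨traceMap_iterate_six_axis_z a, ?_⟩
  have hsecond := traceMap_iterate_three_axis_z a ▸ hasFDerivAt_traceMap_iterate_three_axis_z (-a)
  have hsix := hsecond.comp_mulVecLin (hasFDerivAt_traceMap_iterate_three_axis_z a)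
  rw [← Function.iterate_add traceMap 3 3] at hsix
  rw [hsix.fderiv, LinearMap.coe_toContinuousLinearMap]
  congr 1
  simp only [Matrix.mul_fin_three]
  ring_nf
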